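/- Suppose α_* is the supremum of all α such that stick[K] ≥ α√(c[K]) for all but finitely many K, and suppose (i) stick[K] ≥ √2·√(c[K]+1/8)+7/2 for all K, and (ii) there are knots K_p with c[K_p] = p²−1 → ∞ and stick[K_p] = 2p+2. Then √2 ≤ α_* ≤ 2. -/
import Mathlib


/-- If `α_*` is the supremum of all `α` such that `stick K ≥ α·√(c K)` for all
knots of sufficiently large crossing number, and Calvo's bound holds for all
knots, and there are knots `K p` with `c (K p) = p² - 1` and
`stick (K p) = 2p + 2`, then `√2 ≤ α_* ≤ 2`. -/
theorem alpha_star_bounds {ι : Type*} (c stick : ι → ℕ)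
    (hunbdd : ∀ M : ℕ, ∃ K : ι, M < c K)
    (hfib : ∀ m : ℕ, {K : ι | c K = m}.Finite)
    (calvo : ∀ K : ι, (stick K : ℝ) ≥ Real.sqrt 2 * Real.sqrt ((c K : ℝ) + 1 / 8) + 7 / 2)
    (K : ℕ → ι)
    (hcK : ∀ p, 2 ≤ p → c (K p) = p ^ 2 - 1)
    (hstickK : ∀ p, 2 ≤ p → stick (K p) = 2 * p + 2)
    (αstar : ℝ)
    (hαstar : αstar = sSup {α : ℝ |
      ∃ C : ℝ, ∀ J : ι, (c J : ℝ) > C → (stick J : ℝ) ≥ α * Real.sqrt (c J : ℝ)}) :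
    Real.sqrt 2 ≤ αstar ∧ αstar ≤ 2 := by
  subst hαstar
  have hmem : Real.sqrt 2 ∈ {α : ℝ |
      ∃ C : ℝ, ∀ J : ι, (c J : ℝ) > C → (stick J : ℝ) ≥ α * Real.sqrt (c J : ℝ)} := by
    refine ⟨0, fun J _ => ?_⟩
    have h1 : Real.sqrt (c J : ℝ) ≤ Real.sqrt ((c J : ℝ) + 1/8) :=
      Real.sqrt_le_sqrt (by linarith)
    have h2 := mul_le_mul_of_nonneg_left h1 (Real.sqrt_nonneg 2)
    have := calvo J
    linarith
  have hub : ∀ α ∈ {α : ℝ |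
      ∃ C : ℝ, ∀ J : ι, (c J : ℝ) > C → (stick J : ℝ) ≥ α * Real.sqrt (c J : ℝ)},
      α ≤ 2 := by
    rintro α ⟨C, hC⟩
    by_contra hlt
    push_neg at hlt
    obtain ⟨p, hp⟩ := exists_nat_gt (max 2 (max C ((α + 2) / (α - 2))))
    have hp2 : 2 ≤ p := by
      have := (le_max_left 2 _).trans hp.le
      exact_mod_cast this
    have hpR : (2 : ℝ) ≤ (p : ℝ) := by exact_mod_cast hp2
    have hpC : (p : ℝ) > C := lt_of_le_of_lt ((le_max_left C _).trans (le_max_right 2 _)) hp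
    have hpα : (p : ℝ) > (α + 2) / (α - 2) :=
      lt_of_le_of_lt ((le_max_right C _).trans (le_max_right 2 _)) hp
    have hcast : ((c (K p) : ℝ)) = (p : ℝ) ^ 2 - 1 := by
      rw [hcK p hp2]
      have h1 : 1 ≤ p ^ 2 := by nlinarith
      push_cast [Nat.cast_sub h1]
      ring
    have hcgt : (c (K p) : ℝ) > C := by rw [hcast]; nlinarith
    have hmain := hC (K p) hcgt
    rw [hstickK p hp2, hcast] at hmain
    push_cast at hmain
    have hsq : Real.sqrt ((p : ℝ) ^ 2 - 1) ≥ (p : ℝ) - 1 := by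
      rw [ge_iff_le, show (p : ℝ) - 1 = Real.sqrt (((p : ℝ) - 1) ^ 2) from
        (Real.sqrt_sq (by linarith)).symm]
      exact Real.sqrt_le_sqrt (by nlinarith)
    have hα0 : (0 : ℝ) < α := by linarith
    have h3 : (2 * (p : ℝ) + 2) ≥ α * ((p : ℝ) - 1) :=
      le_trans (by nlinarith) hmain
    have hd : (0 : ℝ) < α - 2 := by linarith
    have h4 : α + 2 < (p : ℝ) * (α - 2) := (div_lt_iff₀ hd).mp hpα
    nlinarith
  exact ⟨le_csSup ⟨2, hub⟩ hmem, csSup_le ⟨_, hmem⟩ hub⟩
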